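/- arXiv:2507.19587 — 4 statements merged into one kernel-verified Lean document; each statement's English description precedes it below -/
import Mathlib

section
/- Let A be a finite-dimensional local commutative unital ℂ-algebra which is Gorenstein, with maximal ideal 𝔪 and d maximal with 𝔪^d ≠ 0. Choose a basis a_1, …, a_n of A adapted to the filtration A ⊃ 𝔪 ⊃ 𝔪² ⊃ … ⊃ 𝔪^d (consecutive subsequences give bases of the quotients 𝔪^k/𝔪^{k+1}), so a_n spans 𝔪^d. Then the determinant of the multiplication table M (the n×n matrix over ℂ[a_1,…,a_n] whose (k,l) entry is the linear form expressing a_k·a_l in the basis) is a nonzero scalar multiple of a_n^n. -/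
open MvPolynomial

/-- The multiplication table of a finite-dimensional `ℂ`-algebra `A` with respect to a basis
`b`: the matrix of linear forms whose `(k,l)` entry expresses the product `b k * b l` in the
basis `b`, written in the dual variables `X i`. -/
noncomputable def multTable {A : Type*} [CommRing A] [Algebra ℂ A]
    {ι : Type*} [Fintype ι] [DecidableEq ι] (b : Module.Basis ι ℂ A) :
    Matrix ι ι (MvPolynomial ι ℂ) :=
  Matrix.of fun k l => ∑ i, C (b.repr (b k * b l) i) * X i

/-- The socle of `A` as a `ℂ`-submodule: elements killed by the maximal ideal. -/
private def socSubmodule (A : Type*) [CommRing A] [Algebra ℂ A] [IsLocalRing A] :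
    Submodule ℂ A where
  carrier := {x | ∀ m ∈ IsLocalRing.maximalIdeal A, x * m = 0}
  add_mem' := by
    intro x y hx hy m hm
    rw [add_mul, hx m hm, hy m hm, add_zero]
  zero_mem' := by intro m _; rw [zero_mul]
  smul_mem' := by
    intro c x hx m hm
    rw [smul_mul_assoc, hx m hm, smul_zero]

/-- The maximal ideal has codimension 1. -/
private theorem finrank_maximalIdeal (A : Type*) [CommRing A] [Algebra ℂ A]
    [FiniteDimensional ℂ A] [IsLocalRing A] :
    Module.finrank ℂ (Submodule.restrictScalars ℂ (IsLocalRing.maximalIdeal A)) + 1 =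
      Module.finrank ℂ A := by
  set m := Submodule.restrictScalars ℂ (IsLocalRing.maximalIdeal A)
  have hne : m ≠ ⊤ := by
    intro h
    have h1 : (1 : A) ∈ IsLocalRing.maximalIdeal A := by
      have : (1 : A) ∈ m := h ▸ Submodule.mem_top
      exact this
    exact (IsLocalRing.maximalIdeal.isMaximal A).ne_top (Ideal.eq_top_of_isUnit_mem _ h1 isUnit_one)
  have hlt : Module.finrank ℂ m < Module.finrank ℂ A :=
    Submodule.finrank_lt hne
  -- lower bound: A = ℂ•1 ⊔ m
  have hsup : (ℂ ∙ (1 : A)) ⊔ m = ⊤ := by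
    rw [Submodule.eq_top_iff']
    intro a
    obtain ⟨c, hc⟩ := spectrum.nonempty_of_isAlgClosed_of_finiteDimensional ℂ a
    rw [spectrum.mem_iff] at hc
    have hm : algebraMap ℂ A c - a ∈ IsLocalRing.maximalIdeal A := hc
    have : a = c • (1 : A) + -(algebraMap ℂ A c - a) := by
      rw [Algebra.algebraMap_eq_smul_one] at *
      ring
    rw [this]
    exact Submodule.add_mem_sup (Submodule.mem_span_singleton.2 ⟨c, rfl⟩)
      (Submodule.neg_mem _ hm)
  have hle : Module.finrank ℂ A ≤ 1 + Module.finrank ℂ m := by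
    have h1 : Module.finrank ℂ (ℂ ∙ (1 : A)) ≤ 1 :=
      le_of_eq (finrank_span_singleton (one_ne_zero : (1 : A) ≠ 0))
    have := Submodule.finrank_sup_add_finrank_inf_eq (ℂ ∙ (1 : A)) m
    calc Module.finrank ℂ A = Module.finrank ℂ ((ℂ ∙ (1 : A)) ⊔ m : Submodule ℂ A) := by
          rw [hsup, finrank_top]
      _ ≤ 1 + Module.finrank ℂ m := by omega
  omega

/-- The key algebraic lemma: the evaluated multiplication table has nonzero determinant
iff the coefficient of the socle coordinate is nonzero. -/
private theorem det_eval_ne_zero_iff {A : Type*} [CommRing A] [Algebra ℂ A]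
    [FiniteDimensional ℂ A] [IsLocalRing A]
    (hGor : ∃ l : A →ₗ[ℂ] ℂ, Function.Bijective ((LinearMap.mul ℂ A).compr₂ l))
    {n d : ℕ} (b : Module.Basis (Fin n) ℂ A) (last : Fin n)
    (hspan : Submodule.restrictScalars ℂ ((IsLocalRing.maximalIdeal A) ^ d : Ideal A) =
      ℂ ∙ b last)
    (hzero : ((IsLocalRing.maximalIdeal A) ^ (d + 1) : Ideal A) = ⊥)
    (ξ : Fin n → ℂ) :
    (Matrix.of fun k l => ∑ i, b.repr (b k * b l) i * ξ i).det ≠ 0 ↔ ξ last ≠ 0 := by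
  set 𝔪 := IsLocalRing.maximalIdeal A with h𝔪
  have hblast : b last ∈ (𝔪 ^ d : Ideal A) := by
    have : b last ∈ Submodule.restrictScalars ℂ (𝔪 ^ d : Ideal A) := by
      rw [hspan]; exact Submodule.mem_span_singleton_self _
    exact this
  -- the linear functional determined by ξ
  set φ : A →ₗ[ℂ] ℂ := ∑ i, ξ i • b.coord i with hφ
  have hφ_apply : ∀ x : A, φ x = ∑ i, ξ i * b.repr x i := by
    intro x
    simp [hφ, LinearMap.sum_apply, Module.Basis.coord_apply]
  have hφ_blast : φ (b last) = ξ last := by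
    rw [hφ_apply]
    simp [Module.Basis.repr_self, Finsupp.single_apply]
  constructor
  · -- det ≠ 0 → ξ last ≠ 0
    intro hdet hlast
    apply hdet
    apply Matrix.det_eq_zero_of_row_eq_zero last
    intro l
    have hmem : b last * b l ∈ (𝔪 ^ d : Ideal A) := Ideal.mul_mem_right _ _ hblast
    have : b last * b l ∈ (ℂ ∙ b last) := by
      rw [← hspan]; exact hmem
    obtain ⟨c, hc⟩ := Submodule.mem_span_singleton.1 this
    have : (∑ i, b.repr (b last * b l) i * ξ i) = c * ξ last := by
      rw [← hc, map_smul]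
      rw [Finset.sum_eq_single last]
      · simp [Module.Basis.repr_self]
      · intro i _ hi
        simp [Module.Basis.repr_self, Finsupp.single_apply, Ne.symm hi]
      · simp
    simp only [Matrix.of_apply]
    rw [this, hlast, mul_zero]
  · -- ξ last ≠ 0 → det ≠ 0
    intro hlast hdet
    obtain ⟨v, hv, hMv⟩ := (Matrix.exists_mulVec_eq_zero_iff).2 hdet
    set a : A := ∑ l, v l • b l with ha
    have ha0 : a ≠ 0 := by
      intro h
      apply hv
      have h2 : b.equivFun.symm v = 0 := by
        rw [Module.Basis.equivFun_symm_apply]; exact h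
      exact (LinearEquiv.map_eq_zero_iff _).1 h2
    -- φ (a * y) = 0 for all y
    have key : ∀ y : A, φ (a * y) = 0 := by
      have : φ ∘ₗ LinearMap.mulLeft ℂ a = 0 := by
        apply b.ext
        intro k
        simp only [LinearMap.comp_apply, LinearMap.mulLeft_apply, LinearMap.zero_apply]
        have hMvk : (Matrix.of fun k l => ∑ i, b.repr (b k * b l) i * ξ i).mulVec v k = 0 := by
          rw [hMv]; rfl
        rw [Matrix.mulVec, dotProduct] at hMvk
        calc φ (a * b k) = ∑ l, v l * φ (b k * b l) := by
              rw [ha, Finset.sum_mul]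
              rw [map_sum]
              congr 1; funext l
              rw [smul_mul_assoc, map_smul, smul_eq_mul, mul_comm (b l) (b k)]
          _ = ∑ l, (Matrix.of fun k l => ∑ i, b.repr (b k * b l) i * ξ i) k l * v l := by
              congr 1; funext l
              rw [hφ_apply]
              simp only [Matrix.of_apply]
              rw [Finset.mul_sum, Finset.sum_mul]
              exact Finset.sum_congr rfl fun i _ => by ring
          _ = 0 := hMvk
      intro y
      have := congrFun (congrArg (fun f => f.toFun) this) y
      simpa using this
    -- find a nonzero socle element in the "radical"
    have hQ0 : ∃ y ∈ (𝔪 ^ 0 : Ideal A), a * y ≠ 0 := by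
      refine ⟨1, by simp, by simpa using ha0⟩
    have hQd1 : ¬ ∃ y ∈ (𝔪 ^ (d + 1) : Ideal A), a * y ≠ 0 := by
      rintro ⟨y, hy, hay⟩
      rw [hzero] at hy
      rw [Submodule.mem_bot] at hy
      exact hay (by rw [hy, mul_zero])
    classical
    have hex : ∃ k, ¬ ∃ y ∈ (𝔪 ^ k : Ideal A), a * y ≠ 0 := ⟨d + 1, hQd1⟩
    have hk0pos : Nat.find hex ≠ 0 := by
      intro h
      apply Nat.find_spec hex
      rw [h]
      exact hQ0
    obtain ⟨y, hy, hay⟩ : ∃ y ∈ (𝔪 ^ (Nat.find hex - 1) : Ideal A), a * y ≠ 0 := by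
      by_contra h
      exact Nat.find_min hex (Nat.sub_lt (Nat.pos_of_ne_zero hk0pos) one_pos) h
    set z := a * y with hz
    have hzsoc : z ∈ socSubmodule A := by
      intro m hm
      by_contra hzm
      apply Nat.find_spec hex
      refine ⟨y * m, ?_, ?_⟩
      · have heq : Nat.find hex = (Nat.find hex - 1) + 1 := by omega
        rw [heq, pow_succ]
        exact Ideal.mul_mem_mul hy hm
      · rw [← mul_assoc]; exact hzm
    -- the socle equals the span of b last
    have hsoc_eq : socSubmodule A = (ℂ ∙ b last) := by
      obtain ⟨l, hl⟩ := hGor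
      set ψ := (LinearMap.mul ℂ A).compr₂ l with hψ
      have hinj : Function.Injective ψ := hl.1
      have hmap : (socSubmodule A).map ψ ≤
          (Submodule.restrictScalars ℂ 𝔪).dualAnnihilator := by
        rintro - ⟨x, hx, rfl⟩
        rw [Submodule.mem_dualAnnihilator]
        intro w hw
        have : x * w = 0 := hx w hw
        simp [hψ, LinearMap.compr₂_apply, LinearMap.mul_apply', this]
      have hrank1 : Module.finrank ℂ ((Submodule.restrictScalars ℂ 𝔪).dualAnnihilator) = 1 := by
        have h1 : Module.finrank ℂ ((Submodule.restrictScalars ℂ 𝔪).dualAnnihilator) =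
            Module.finrank ℂ (A ⧸ (Submodule.restrictScalars ℂ 𝔪)) :=
          (Subspace.quotEquivAnnihilator (Submodule.restrictScalars ℂ 𝔪)).finrank_eq.symm
        have h2 := Submodule.finrank_quotient_add_finrank (Submodule.restrictScalars ℂ 𝔪)
        have h3 := finrank_maximalIdeal A
        rw [← h𝔪] at h3
        rw [h1]
        omega
      have hsoc_le : Module.finrank ℂ (socSubmodule A) ≤ 1 := by
        have heq : Module.finrank ℂ (socSubmodule A) =
            Module.finrank ℂ ((socSubmodule A).map ψ) :=
          (Submodule.equivMapOfInjective ψ hinj (socSubmodule A)).finrank_eq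
        rw [heq]
        calc Module.finrank ℂ ((socSubmodule A).map ψ)
            ≤ Module.finrank ℂ ((Submodule.restrictScalars ℂ 𝔪).dualAnnihilator) :=
              Submodule.finrank_mono hmap
          _ = 1 := hrank1
      have hblast_soc : b last ∈ socSubmodule A := by
        intro m hm
        have : b last * m ∈ (𝔪 ^ (d + 1) : Ideal A) := by
          rw [pow_succ]
          exact Ideal.mul_mem_mul hblast hm
        rw [hzero, Submodule.mem_bot] at this
        exact this
      have hle : (ℂ ∙ b last) ≤ socSubmodule A := by
        rw [Submodule.span_singleton_le_iff_mem]
        exact hblast_soc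
      have hbne : b last ≠ 0 := b.ne_zero last
      have h1 : Module.finrank ℂ (ℂ ∙ b last) = 1 := finrank_span_singleton hbne
      exact (Submodule.eq_of_le_of_finrank_le hle (by omega)).symm
    -- derive contradiction
    rw [hsoc_eq] at hzsoc
    obtain ⟨c, hc⟩ := Submodule.mem_span_singleton.1 hzsoc
    have hzne : z ≠ 0 := hay
    have hcne : c ≠ 0 := by
      intro h; apply hzne; rw [← hc, h, zero_smul]
    have : φ z = 0 := key y
    rw [← hc, map_smul, smul_eq_mul, hφ_blast] at this
    rcases mul_eq_zero.1 this with h | h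
    · exact hcne h
    · exact hlast h

/-- Let `A` be a finite-dimensional local commutative unital Gorenstein `ℂ`-algebra, `𝔪` its
maximal ideal and `d` maximal with `𝔪^d ≠ 0`.  Let `a_1, …, a_n` be a basis adapted to the
filtration `A ⊃ 𝔪 ⊃ 𝔪² ⊃ ⋯ ⊃ 𝔪^d` (there are thresholds `t k` such that `𝔪^k` is spanned by
the basis vectors of index `≥ t k`), so that the last basis vector spans `𝔪^d`.
Then the determinant of the multiplication table is a nonzero scalar multiple of `a_nⁿ`. -/
theorem det_multTable_gorenstein
    (A : Type*) [CommRing A] [Algebra ℂ A] [FiniteDimensional ℂ A] [IsLocalRing A]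
    (hGor : ∃ l : A →ₗ[ℂ] ℂ,
      Function.Bijective ((LinearMap.mul ℂ A).compr₂ l))
    (n d : ℕ) (hn : 0 < n) (b : Module.Basis (Fin n) ℂ A)
    (t : ℕ → ℕ) (hmono : Monotone t) (ht0 : t 0 = 0) (htd : t d = n - 1)
    (htd1 : t (d + 1) = n)
    (hfil : ∀ k ≤ d + 1,
      (Submodule.restrictScalars ℂ ((IsLocalRing.maximalIdeal A) ^ k : Ideal A)) =
        Submodule.span ℂ (⇑b '' {i : Fin n | t k ≤ (i : ℕ)}))
    (hd : ((IsLocalRing.maximalIdeal A) ^ d : Ideal A) ≠ ⊥) :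
    ∃ c : ℂ, c ≠ 0 ∧
      (multTable b).det = C c * X (⟨n - 1, by omega⟩ : Fin n) ^ n := by
  classical
  set last : Fin n := ⟨n - 1, by omega⟩ with hlast_def
  set 𝔪 := IsLocalRing.maximalIdeal A with h𝔪
  -- 𝔪^d = ℂ ∙ b last
  have hspan : Submodule.restrictScalars ℂ ((𝔪) ^ d : Ideal A) = ℂ ∙ b last := by
    rw [hfil d (by omega), htd]
    have hset : {i : Fin n | n - 1 ≤ (i : ℕ)} = {last} := by
      ext i
      simp only [Set.mem_setOf_eq, Set.mem_singleton_iff]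
      constructor
      · intro h
        have := i.isLt
        apply Fin.ext
        simp only [hlast_def]
        omega
      · intro h; rw [h]
    rw [hset, Set.image_singleton]
  -- 𝔪^(d+1) = ⊥
  have hzero : ((𝔪) ^ (d + 1) : Ideal A) = ⊥ := by
    have h := hfil (d + 1) le_rfl
    rw [htd1] at h
    have hset : {i : Fin n | n ≤ (i : ℕ)} = ∅ := by
      ext i
      simp only [Set.mem_setOf_eq, Set.mem_empty_iff_false, iff_false, not_le]
      exact i.isLt
    rw [hset, Set.image_empty, Submodule.span_empty] at h
    ext x
    simp only [Submodule.mem_bot]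
    constructor
    · intro hx
      have : x ∈ Submodule.restrictScalars ℂ ((𝔪) ^ (d + 1) : Ideal A) := hx
      rw [h] at this
      exact this
    · intro hx; rw [hx]; exact zero_mem _
  -- evaluated matrix
  set G : (Fin n → ℂ) → Matrix (Fin n) (Fin n) ℂ :=
    fun ξ => Matrix.of fun k l => ∑ i, b.repr (b k * b l) i * ξ i with hG
  have hGdet : ∀ ξ : Fin n → ℂ, (G ξ).det ≠ 0 ↔ ξ last ≠ 0 := fun ξ =>
    det_eval_ne_zero_iff hGor b last hspan hzero ξ
  set P : MvPolynomial (Fin n) ℂ := (multTable b).det with hP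
  -- evaluation of P
  have hevalP : ∀ ξ : Fin n → ℂ, eval ξ P = (G ξ).det := by
    intro ξ
    rw [hP, RingHom.map_det]
    congr 1
    ext k l
    simp [multTable, hG]
  -- total degree bound
  have hdeg : P.totalDegree ≤ n := by
    rw [hP, Matrix.det_apply]
    apply (totalDegree_finset_sum _ _).trans
    apply Finset.sup_le
    intro σ _
    have hentry : ∀ k l, ((multTable b) k l).totalDegree ≤ 1 := by
      intro k l
      simp only [multTable, Matrix.of_apply]
      apply (totalDegree_finset_sum _ _).trans
      apply Finset.sup_le
      intro i _
      apply (totalDegree_mul _ _).trans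
      simp [totalDegree_C, totalDegree_X]
    have hprod : (∏ i, (multTable b) (σ i) i).totalDegree ≤ n := by
      apply (totalDegree_finset_prod _ _).trans
      calc ∑ i, ((multTable b) (σ i) i).totalDegree ≤ ∑ _i : Fin n, 1 :=
            Finset.sum_le_sum fun i _ => hentry (σ i) i
        _ = n := by simp
    -- sign smul
    have : (Equiv.Perm.sign σ • ∏ i, (multTable b) (σ i) i).totalDegree
        ≤ (∏ i, (multTable b) (σ i) i).totalDegree := by
      rcases Int.units_eq_one_or (Equiv.Perm.sign σ) with h | h
      · rw [h, one_smul]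
      · rw [h]
        have : ((-1 : ℤˣ) • ∏ i, (multTable b) (σ i) i) = -(∏ i, (multTable b) (σ i) i) := by
          simp
        rw [this, totalDegree_neg]
    exact this.trans hprod
  -- the one-variable specializations
  set g : (Fin n → ℂ) → Polynomial ℂ := fun ξ =>
    MvPolynomial.eval₂ Polynomial.C
      (fun i => if i = last then Polynomial.X else Polynomial.C (ξ i)) P with hg
  have hgeval : ∀ (ξ : Fin n → ℂ) (s : ℂ),
      (g ξ).eval s = eval (Function.update ξ last s) P := by
    intro ξ s
    rw [hg]
    have := MvPolynomial.eval₂_comp_left (Polynomial.evalRingHom s) Polynomial.C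
      (fun i => if i = last then Polynomial.X else Polynomial.C (ξ i)) P
    simp only [Polynomial.coe_evalRingHom] at this
    rw [this]
    have h1 : (Polynomial.evalRingHom s).comp Polynomial.C = RingHom.id ℂ := by
      ext x; simp
    have h2 : ((Polynomial.eval s) ∘ fun i =>
        if i = last then Polynomial.X else Polynomial.C (ξ i)) =
        Function.update ξ last s := by
      funext i
      by_cases h : i = last <;> simp [h, Function.update_apply]
    rw [h1, h2]
    rfl
  -- coefficient n of g ξ is independent of ξ
  set c : ℂ := MvPolynomial.coeff (Finsupp.single last n) P with hc
  have hgcoeff : ∀ ξ : Fin n → ℂ, (g ξ).coeff n = c := by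
    intro ξ
    rw [hg]
    simp only
    rw [MvPolynomial.eval₂_eq]
    rw [Polynomial.finset_sum_coeff]
    have hterm : ∀ D ∈ P.support,
        (Polynomial.C (MvPolynomial.coeff D P) *
          ∏ i ∈ D.support, (if i = last then Polynomial.X else Polynomial.C (ξ i)) ^ D i).coeff n
        = if D = Finsupp.single last n then MvPolynomial.coeff D P else 0 := by
      intro D hD
      by_cases hDeq : D = Finsupp.single last n
      · subst hDeq
        rw [if_pos rfl]
        have hsupp : (Finsupp.single last n).support = {last} :=
          Finsupp.support_single_ne_zero _ (by omega)
        rw [hsupp, Finset.prod_singleton, if_pos rfl, Finsupp.single_eq_same]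
        rw [Polynomial.coeff_C_mul, Polynomial.coeff_X_pow, if_pos rfl, mul_one]
      · rw [if_neg hDeq]
        -- D last < n
        have hsum : (D.sum fun _ e => e) ≤ n := le_trans (le_totalDegree hD) hdeg
        have hsum' : ∑ i ∈ D.support, D i ≤ n := by
          rw [Finsupp.sum] at hsum
          exact hsum
        have hDlast : D last < n := by
          by_cases hmem : last ∈ D.support
          · have hle : D last ≤ ∑ i ∈ D.support, D i :=
              Finset.single_le_sum (fun i _ => Nat.zero_le _) hmem
            rcases Nat.lt_or_ge (D last) n with h | h
            · exact h
            · exfalso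
              have hDlast_eq : D last = n := le_antisymm (le_trans hle hsum') h
              apply hDeq
              ext i
              by_cases hi : i = last
              · rw [hi, hDlast_eq, Finsupp.single_eq_same]
              · rw [Finsupp.single_eq_of_ne' (Ne.symm hi)]
                by_contra hne
                have hine : D i ≠ 0 := hne
                have himem : i ∈ D.support := Finsupp.mem_support_iff.2 hine
                have : D last + ∑ j ∈ D.support.erase last, D j = ∑ j ∈ D.support, D j :=
                  Finset.add_sum_erase _ _ hmem
                have h2 : D i ≤ ∑ j ∈ D.support.erase last, D j :=
                  Finset.single_le_sum (fun j _ => Nat.zero_le _)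
                    (Finset.mem_erase.2 ⟨hi, himem⟩)
                omega
          · rw [Finsupp.notMem_support_iff] at hmem
            rw [hmem]
            exact hn
        -- now bound the natDegree
        apply Polynomial.coeff_eq_zero_of_natDegree_lt
        calc (Polynomial.C (MvPolynomial.coeff D P) *
              ∏ i ∈ D.support, (if i = last then Polynomial.X else Polynomial.C (ξ i)) ^ D i).natDegree
            ≤ (∏ i ∈ D.support,
                (if i = last then Polynomial.X else Polynomial.C (ξ i)) ^ D i).natDegree :=
              Polynomial.natDegree_C_mul_le _ _
          _ ≤ ∑ i ∈ D.support,
                ((if i = last then Polynomial.X else Polynomial.C (ξ i)) ^ D i).natDegree :=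
              Polynomial.natDegree_prod_le _ _
          _ ≤ ∑ i ∈ D.support, (if i = last then D i else 0) := by
              apply Finset.sum_le_sum
              intro i _
              by_cases h : i = last
              · rw [if_pos h, if_pos h, Polynomial.natDegree_X_pow]
              · rw [if_neg h, if_neg h, ← Polynomial.C_pow, Polynomial.natDegree_C]
          _ ≤ D last := by
              rw [Finset.sum_ite_eq' D.support last (fun i => D i)]
              split <;> omega
          _ < n := hDlast
    rw [Finset.sum_congr rfl hterm]
    rw [Finset.sum_ite_eq' P.support (Finsupp.single last n) (fun D => MvPolynomial.coeff D P)]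
    by_cases h : Finsupp.single last n ∈ P.support
    · rw [if_pos h]
    · rw [if_neg h]
      rw [MvPolynomial.notMem_support_iff] at h
      rw [hc, h]
  -- scaling: eval (s • ξ) P = s^n * eval ξ P
  have hscale : ∀ (s : ℂ) (ξ : Fin n → ℂ), eval (s • ξ) P = s ^ n * eval ξ P := by
    intro s ξ
    rw [hevalP, hevalP]
    have : G (s • ξ) = s • G ξ := by
      ext k l
      simp only [hG, Matrix.of_apply, Matrix.smul_apply, Pi.smul_apply, smul_eq_mul]
      rw [Finset.mul_sum]
      congr 1; funext i
      ring
    rw [this, Matrix.det_smul, Fintype.card_fin]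
  -- c ≠ 0 via the point e
  set e : Fin n → ℂ := fun i => if i = last then 1 else 0 with he
  have helast : e last = 1 := by simp [he]
  have hupd : ∀ s : ℂ, Function.update e last s = s • e := by
    intro s
    funext i
    by_cases h : i = last <;> simp [Function.update_apply, h, he]
  have hge : g e = Polynomial.C (eval e P) * Polynomial.X ^ n := by
    apply Polynomial.funext
    intro s
    rw [hgeval, hupd, hscale]
    rw [Polynomial.eval_mul, Polynomial.eval_C, Polynomial.eval_pow, Polynomial.eval_X]
    ring
  have hevale : eval e P ≠ 0 := by
    rw [hevalP]
    rw [hGdet]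
    rw [helast]
    exact one_ne_zero
  have hcne : c ≠ 0 := by
    have := hgcoeff e
    rw [hge] at this
    rw [Polynomial.coeff_C_mul, Polynomial.coeff_X_pow, if_pos rfl, mul_one] at this
    rw [← this]
    exact hevale
  -- pointwise identity
  have hpoint : ∀ ξ : Fin n → ℂ, eval ξ P = c * ξ last ^ n := by
    intro ξ
    have hq := hgcoeff ξ
    have hqne : g ξ ≠ 0 := by
      intro h
      rw [h, Polynomial.coeff_zero] at hq
      exact hcne hq.symm
    have hroots : ∀ a ∈ (g ξ).roots, a = 0 := by
      intro a ha
      rw [Polynomial.mem_roots hqne] at ha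
      by_contra hane
      have hne : (g ξ).eval a ≠ 0 := by
        rw [hgeval]
        rw [hevalP, hGdet]
        simp [Function.update_self, hane]
      exact hne ha
    have hsplit : (g ξ) = Polynomial.C (g ξ).leadingCoeff *
        Polynomial.X ^ (g ξ).roots.card := by
      have h1 := Polynomial.Splits.eq_prod_roots (IsAlgClosed.splits (g ξ))
      have h2 : (g ξ).roots.map (fun a => Polynomial.X - Polynomial.C a) =
          (g ξ).roots.map (fun _ => Polynomial.X) := by
        apply Multiset.map_congr rfl
        intro a ha
        rw [hroots a ha]
        simp
      conv_lhs => rw [h1]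
      rw [h2, Multiset.map_const', Multiset.prod_replicate]
    have hcard : (g ξ).roots.card = n ∧ (g ξ).leadingCoeff = c := by
      have := hq
      rw [hsplit] at this
      rw [Polynomial.coeff_C_mul, Polynomial.coeff_X_pow] at this
      by_cases h : n = (g ξ).roots.card
      · rw [if_pos h, mul_one] at this
        exact ⟨h.symm, this⟩
      · rw [if_neg h, mul_zero] at this
        exact absurd this.symm hcne
    have hgform : g ξ = Polynomial.C c * Polynomial.X ^ n := by
      rw [hsplit, hcard.1, hcard.2]
    have := hgeval ξ (ξ last)
    rw [Function.update_eq_self, hgform] at this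
    rw [← this]
    simp
  refine ⟨c, hcne, ?_⟩
  apply MvPolynomial.funext
  intro ξ
  rw [hpoint ξ]
  simp [hlast_def]
end

section
/- Let A be a finite-dimensional commutative Gorenstein local ℂ-algebra with perfect pairing μ(x,y) = λ(xy). Then for every k, μ induces a perfect pairing between 𝔪^k/𝔪^{k+1} and (0 : 𝔪^{k+1})/(0 : 𝔪^k); in particular dim_ℂ (𝔪^k/𝔪^{k+1}) = dim_ℂ ((0 : 𝔪^{k+1})/(0 : 𝔪^k)). -/
open Module LinearMap Submodule

section Aux

variable {A : Type*} [CommRing A] [Algebra ℂ A] [FiniteDimensional ℂ A]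
  (l : A →ₗ[ℂ] ℂ)

/-- orthogonal complement w.r.t. the pairing `(x,y) ↦ l (x*y)` -/
noncomputable def myPerp (W : Submodule ℂ A) : Submodule ℂ A :=
  W.dualAnnihilator.comap ((LinearMap.mul ℂ A).compr₂ l)

lemma mem_myPerp {W : Submodule ℂ A} {y : A} :
    y ∈ myPerp l W ↔ ∀ x ∈ W, l (x * y) = 0 := by
  simp only [myPerp, Submodule.mem_comap, Submodule.mem_dualAnnihilator,
    LinearMap.compr₂_apply, LinearMap.mul_apply']
  constructor
  · intro h x hx; rw [mul_comm]; exact h x hx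
  · intro h x hx; rw [mul_comm]; exact h x hx

lemma finrank_myPerp (hl : Function.Bijective ((LinearMap.mul ℂ A).compr₂ l))
    (W : Submodule ℂ A) :
    finrank ℂ (myPerp l W) = finrank ℂ A - finrank ℂ W := by
  let e : A ≃ₗ[ℂ] Module.Dual ℂ A :=
    LinearEquiv.ofBijective ((LinearMap.mul ℂ A).compr₂ l) hl
  have h1 : myPerp l W = W.dualAnnihilator.comap (e : A →ₗ[ℂ] Module.Dual ℂ A) := rfl
  have h2 : finrank ℂ (myPerp l W) = finrank ℂ W.dualAnnihilator := by
    rw [h1, Submodule.comap_equiv_eq_map_symm]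
    exact (LinearEquiv.finrank_map_eq _ _)
  have h3 : finrank ℂ W.dualAnnihilator = finrank ℂ (A ⧸ W) :=
    (Subspace.quotEquivAnnihilator W).symm.finrank_eq
  have h5 := Submodule.finrank_quotient_add_finrank W
  have h4 := W.finrank_le
  omega

lemma myPerp_ideal (hl : Function.Bijective ((LinearMap.mul ℂ A).compr₂ l))
    (J : Ideal A) :
    myPerp l (J.restrictScalars ℂ) =
      Submodule.restrictScalars ℂ ((⊥ : Submodule A A).colon J) := by
  ext y
  rw [mem_myPerp]
  simp only [Submodule.restrictScalars_mem, Submodule.mem_colon, Submodule.mem_bot,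
    smul_eq_mul]
  constructor
  · intro h p hp
    apply hl.injective
    rw [map_zero]
    ext a
    simp only [LinearMap.compr₂_apply, LinearMap.mul_apply', LinearMap.zero_apply]
    have := h (a * p) (J.mul_mem_left a hp)
    rw [show y * p * a = a * p * y by ring]
    exact this
  · intro h x hx
    rw [mul_comm, h x hx, map_zero]

lemma le_myPerp_myPerp (W : Submodule ℂ A) : W ≤ myPerp l (myPerp l W) := by
  intro x hx
  rw [mem_myPerp]
  intro y hy
  rw [mem_myPerp] at hy
  rw [mul_comm]
  exact hy x hx

lemma myPerp_myPerp (hl : Function.Bijective ((LinearMap.mul ℂ A).compr₂ l))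
    (W : Submodule ℂ A) : myPerp l (myPerp l W) = W := by
  refine (Submodule.eq_of_le_of_finrank_le (le_myPerp_myPerp l W) ?_).symm
  rw [finrank_myPerp l hl, finrank_myPerp l hl]
  have h4 := W.finrank_le
  omega

end Aux

/-- Let `(A, 𝔪)` be a finite-dimensional commutative local `ℂ`-algebra and `λ ∈ A*` induce a
perfect pairing `μ(x,y) = λ(xy)`.  Then for every `k`, `μ` induces a perfect pairing between
`𝔪^k/𝔪^{k+1}` and `(0 : 𝔪^{k+1})/(0 : 𝔪^k)`: an element of `𝔪^k` pairing to zero with all of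
`(0 : 𝔪^{k+1})` lies in `𝔪^{k+1}`, an element of `(0 : 𝔪^{k+1})` pairing to zero with all of
`𝔪^k` lies in `(0 : 𝔪^k)`, and in particular the two quotients have the same `ℂ`-dimension. -/
theorem gorenstein_induced_perfect_pairing
    (A : Type*) [CommRing A] [Algebra ℂ A] [FiniteDimensional ℂ A] [IsLocalRing A]
    (l : A →ₗ[ℂ] ℂ)
    (hl : Function.Bijective ((LinearMap.mul ℂ A).compr₂ l))
    (k : ℕ) :
    letI 𝔪 : Ideal A := IsLocalRing.maximalIdeal A
    letI ann : ℕ → Ideal A := fun j => (⊥ : Submodule A A).colon ((𝔪 ^ j : Ideal A) : Set A)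
    (∀ x ∈ 𝔪 ^ k, (∀ y ∈ ann (k + 1), l (x * y) = 0) → x ∈ 𝔪 ^ (k + 1)) ∧
    (∀ y ∈ ann (k + 1), (∀ x ∈ 𝔪 ^ k, l (x * y) = 0) → y ∈ ann k) ∧
    Module.finrank ℂ
        ((Submodule.restrictScalars ℂ (𝔪 ^ k : Ideal A)) ⧸
          (Submodule.comap (Submodule.restrictScalars ℂ (𝔪 ^ k : Ideal A)).subtype
            (Submodule.restrictScalars ℂ (𝔪 ^ (k + 1) : Ideal A)))) =
      Module.finrank ℂ
        ((Submodule.restrictScalars ℂ (ann (k + 1) : Ideal A)) ⧸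
          (Submodule.comap (Submodule.restrictScalars ℂ (ann (k + 1) : Ideal A)).subtype
            (Submodule.restrictScalars ℂ (ann k : Ideal A)))) := by
  have hann : ∀ j : ℕ, Submodule.restrictScalars ℂ (((⊥ : Submodule A A).colon ((IsLocalRing.maximalIdeal A ^ j : Ideal A) : Set A)) : Ideal A) =
      myPerp l ((IsLocalRing.maximalIdeal A ^ j : Ideal A).restrictScalars ℂ) := fun j =>
    (myPerp_ideal l hl (IsLocalRing.maximalIdeal A ^ j)).symm
  refine ⟨?_, ?_, ?_⟩
  · intro x _ h
    have hx : x ∈ myPerp l (Submodule.restrictScalars ℂ (((⊥ : Submodule A A).colon ((IsLocalRing.maximalIdeal A ^ (k+1) : Ideal A) : Set A)) : Ideal A)) := by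
      rw [mem_myPerp]
      intro y hy
      rw [mul_comm]
      exact h y hy
    rw [hann, myPerp_myPerp l hl] at hx
    exact hx
  · intro y _ h
    have : y ∈ myPerp l ((IsLocalRing.maximalIdeal A ^ k : Ideal A).restrictScalars ℂ) := by
      rw [mem_myPerp]; exact h
    rw [← hann] at this
    exact this
  · -- dimension count
    have hle1 : (IsLocalRing.maximalIdeal A ^ (k+1) : Ideal A).restrictScalars ℂ ≤
        (IsLocalRing.maximalIdeal A ^ k : Ideal A).restrictScalars ℂ := fun x hx =>
      Ideal.pow_le_pow_right (by omega) hx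
    have hle2 : Submodule.restrictScalars ℂ (((⊥ : Submodule A A).colon ((IsLocalRing.maximalIdeal A ^ k : Ideal A) : Set A)) : Ideal A) ≤
        Submodule.restrictScalars ℂ (((⊥ : Submodule A A).colon ((IsLocalRing.maximalIdeal A ^ (k+1) : Ideal A) : Set A)) : Ideal A) := by
      intro y hy
      simp only [Submodule.restrictScalars_mem, Submodule.mem_colon, Submodule.mem_bot,
        smul_eq_mul] at hy ⊢
      intro p hp
      exact hy p (Ideal.pow_le_pow_right (by omega) hp)
    have key : ∀ (W₁ W₂ : Submodule ℂ A) (h : W₂ ≤ W₁),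
        finrank ℂ (W₁ ⧸ Submodule.comap W₁.subtype W₂) =
          finrank ℂ W₁ - finrank ℂ W₂ := by
      intro W₁ W₂ h
      have h1 : finrank ℂ (Submodule.comap W₁.subtype W₂) = finrank ℂ W₂ :=
        (Submodule.comapSubtypeEquivOfLe h).finrank_eq
      have h2 := Submodule.finrank_quotient_add_finrank (Submodule.comap W₁.subtype W₂)
      omega
    rw [key _ _ hle1, key _ _ hle2, hann, hann,
      finrank_myPerp l hl, finrank_myPerp l hl]
    have e1 : finrank ℂ ((IsLocalRing.maximalIdeal A ^ k : Ideal A).restrictScalars ℂ) ≤ finrank ℂ A :=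
      Submodule.finrank_le _
    have e2 : finrank ℂ ((IsLocalRing.maximalIdeal A ^ (k+1) : Ideal A).restrictScalars ℂ) ≤ finrank ℂ A :=
      Submodule.finrank_le _
    have e3 : finrank ℂ ((IsLocalRing.maximalIdeal A ^ (k+1) : Ideal A).restrictScalars ℂ) ≤
        finrank ℂ ((IsLocalRing.maximalIdeal A ^ k : Ideal A).restrictScalars ℂ) :=
      Submodule.finrank_mono hle1
    omega
end

section
/- Let A be a finite-dimensional commutative unital ℂ-algebra written as a direct product A = A_1 × ⋯ × A_r of local algebras with dim_ℂ A_i = d_i. Choose a basis of A given by unions of bases of the A_i, with each A_i's basis adapted to its 𝔪_i-filtration, and let a_i denote the coordinate of the idempotent-unit direction of A_i (the socle-generator coordinate if A_i is Gorenstein). If every A_i is Gorenstein, then the determinant of the multiplication table of A is a nonzero scalar multiple of the monomial a_1^{d_1} ⋯ a_r^{d_r}, where a_i is the variable corresponding to the socle generator of A_i. -/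
open MvPolynomial

lemma det_one_add_of_isNilpotent {n : Type*} [Fintype n] [DecidableEq n]
    {N : Matrix n n ℂ} (h : IsNilpotent N) : (1 + N).det = 1 := by
  have hc : N.charpoly = Polynomial.X ^ Fintype.card n := by
    have h2 := Matrix.isNilpotent_charpoly_sub_pow_of_isNilpotent (M := N) h
    have h3 := h2.eq_zero
    rwa [sub_eq_zero] at h3
  have he : N.charpoly.eval (-1 : ℂ) = ((Matrix.scalar n (-1 : ℂ)) - N).det := by
    rw [Matrix.charpoly, _root_.eval_det, Matrix.matPolyEquiv_charmatrix]
    rw [Polynomial.eval_sub, Polynomial.eval_X, Polynomial.eval_C]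
  have hsc : (Matrix.scalar n (-1 : ℂ)) - N = -(1 + N) := by
    rw [map_neg, map_one, neg_add]
    abel
  rw [hsc, Matrix.det_neg, hc, Polynomial.eval_pow, Polynomial.eval_X] at he
  have := he.symm
  have hne : ((-1 : ℂ) ^ Fintype.card n) ≠ 0 := pow_ne_zero _ (by norm_num)
  field_simp at this
  exact this

lemma eval_multTable_det {A : Type*} [CommRing A] [Algebra ℂ A]
    {ι : Type*} [Fintype ι] [DecidableEq ι] (b : Module.Basis ι ℂ A) (a : ι → ℂ) :
    eval a (multTable b).det =
      (Matrix.of fun k m => (b.constr ℂ a) (b k * b m) : Matrix ι ι ℂ).det := by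
  rw [RingHom.map_det]
  congr 1
  ext k m
  simp [multTable, Module.Basis.constr_apply_fintype, Module.Basis.equivFun_apply, smul_eq_mul,
    Matrix.map_apply]

open IsLocalRing in
theorem det_multTable_local {A : Type*} [CommRing A] [Algebra ℂ A]
    [FiniteDimensional ℂ A] [IsLocalRing A]
    {d D : ℕ} (hd : 0 < d) (b : Module.Basis (Fin d) ℂ A) (top : Fin d)
    (l : A →ₗ[ℂ] ℂ) (hl : Function.Bijective ((LinearMap.mul ℂ A).compr₂ l))
    (hspan : (Submodule.restrictScalars ℂ ((maximalIdeal A) ^ D : Ideal A)) =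
      Submodule.span ℂ {b top})
    (htop1 : ((maximalIdeal A) ^ (D + 1) : Ideal A) = ⊥) :
    ∃ c : ℂ, c ≠ 0 ∧ (multTable b).det = C c * X top ^ d := by
  classical
  set Φ := (LinearMap.mul ℂ A).compr₂ l with hΦdef
  have hΦ : ∀ u x : A, Φ u x = l (u * x) := fun u x => rfl
  have btop_mem : b top ∈ ((maximalIdeal A) ^ D : Ideal A) := by
    have h1 : b top ∈ Submodule.span ℂ ({b top} : Set A) :=
      Submodule.mem_span_singleton_self _
    rw [← hspan] at h1
    exact h1
  have mul_btop : ∀ x : A, ∃ μ : ℂ, x * b top = μ • b top := by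
    intro x
    have hx : x * b top ∈ ((maximalIdeal A) ^ D : Ideal A) :=
      Ideal.mul_mem_left _ _ btop_mem
    have hx2 : x * b top ∈ Submodule.span ℂ ({b top} : Set A) := by
      rw [← hspan]; exact hx
    obtain ⟨μ, hμ⟩ := Submodule.mem_span_singleton.mp hx2
    exact ⟨μ, hμ.symm⟩
  have btop_ne : b top ≠ 0 := b.ne_zero top
  have kill_mem : ∀ x : A, x * b top = 0 → x ∈ maximalIdeal A := by
    intro x hx
    by_contra hxm
    rw [IsLocalRing.mem_maximalIdeal, mem_nonunits_iff, not_not] at hxm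
    obtain ⟨u, rfl⟩ := hxm
    apply btop_ne
    calc b top = (↑u⁻¹ * ↑u) * b top := by simp
    _ = ↑u⁻¹ * (↑u * b top) := by ring
    _ = 0 := by rw [hx, mul_zero]
  set s0 := l (b top) with hs0def
  have hs0 : s0 ≠ 0 := by
    intro h0
    apply btop_ne
    apply hl.injective
    rw [map_zero]
    ext x
    obtain ⟨μ, hμ⟩ := mul_btop x
    show l (b top * x) = 0
    rw [mul_comm, hμ, map_smul, smul_eq_mul, ← hs0def, h0, mul_zero]
  set Nl : Matrix (Fin d) (Fin d) ℂ := Matrix.of (fun k m => l (b k * b m)) with hNldef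
  have hNl_eq : Nl = LinearMap.toMatrix b b.dualBasis Φ := by
    ext k m
    rw [LinearMap.toMatrix_apply, Module.Basis.dualBasis_repr, hΦ]
    show l (b k * b m) = l (b m * b k)
    rw [mul_comm]
  have hNl : Nl.det ≠ 0 := by
    set e := LinearEquiv.ofBijective Φ hl with hedef
    have hcomp : ((e.symm : Module.Dual ℂ A →ₗ[ℂ] A) ∘ₗ Φ) = LinearMap.id := by
      ext x
      show e.symm (Φ x) = x
      have hx : Φ x = e x := rfl
      rw [hx, LinearEquiv.symm_apply_apply]
    have h1 : LinearMap.toMatrix b.dualBasis b (e.symm : Module.Dual ℂ A →ₗ[ℂ] A)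
        * LinearMap.toMatrix b b.dualBasis Φ = 1 := by
      rw [← LinearMap.toMatrix_comp b b.dualBasis b, hcomp, LinearMap.toMatrix_id]
    intro h0
    have h2 := congrArg Matrix.det h1
    rw [Matrix.det_mul, ← hNl_eq, h0, mul_zero, Matrix.det_one] at h2
    exact zero_ne_one h2
  refine ⟨Nl.det * (s0 ^ d)⁻¹,
    mul_ne_zero hNl (inv_ne_zero (pow_ne_zero _ hs0)), ?_⟩
  apply MvPolynomial.funext
  intro a
  rw [eval_multTable_det]
  have hRHS : eval a (C (Nl.det * (s0 ^ d)⁻¹) * X top ^ d)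
      = Nl.det * (s0 ^ d)⁻¹ * (a top) ^ d := by simp
  rw [hRHS]
  set lam := b.constr ℂ a with hlamdef
  have hlam_top : lam (b top) = a top := b.constr_basis ℂ a top
  by_cases hs : a top = 0
  · rw [hs, zero_pow hd.ne', mul_zero]
    apply Matrix.det_eq_zero_of_row_eq_zero top
    intro j
    show lam (b top * b j) = 0
    obtain ⟨μ, hμ⟩ := mul_btop (b j)
    rw [mul_comm, hμ, map_smul, hlam_top, hs, smul_zero]
  · obtain ⟨u, hu⟩ := hl.surjective ((s0 * (a top)⁻¹) • lam)
    have hu_apply : ∀ x, l (u * x) = (s0 * (a top)⁻¹) * lam x := by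
      intro x
      have h1 := congrArg (fun (f : A →ₗ[ℂ] ℂ) => f x) hu
      simpa [hΦ] using h1
    obtain ⟨ε, hε⟩ := mul_btop u
    have hε1 : ε = 1 := by
      have h1 : l (u * b top) = ε * s0 := by rw [hε, map_smul, smul_eq_mul, hs0def]
      have h2 : l (u * b top) = s0 := by
        rw [hu_apply, hlam_top]
        field_simp
      rw [h2] at h1
      have h3 : ε * s0 = 1 * s0 := by rw [one_mul, ← h1]
      exact mul_right_cancel₀ hs0 h3
    set T := LinearMap.toMatrixAlgEquiv b (LinearMap.mulLeft ℂ u) with hTdef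
    have hT1 : T.det = 1 := by
      have hmu : LinearMap.mulLeft ℂ u = LinearMap.id + LinearMap.mulLeft ℂ (u - 1) := by
        ext x
        simp only [LinearMap.mulLeft_apply, LinearMap.add_apply, LinearMap.id_apply]
        ring
      have hmem : (u - 1) ∈ maximalIdeal A := by
        apply kill_mem
        rw [sub_mul, one_mul, hε, hε1, one_smul, sub_self]
      have hnilA : (u - 1) ^ (D + 1) = 0 := by
        have h1 : (u - 1) ^ (D + 1) ∈ ((maximalIdeal A) ^ (D + 1) : Ideal A) :=
          Ideal.pow_mem_pow hmem _
        rw [htop1] at h1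
        exact h1
      have hnil : IsNilpotent (LinearMap.toMatrixAlgEquiv b (LinearMap.mulLeft ℂ (u - 1))) := by
        refine ⟨D + 1, ?_⟩
        rw [← map_pow, LinearMap.pow_mulLeft, hnilA]
        have : LinearMap.mulLeft ℂ (0 : A) = 0 := by
          ext x; simp
        rw [this, map_zero]
      rw [hTdef, hmu, ← Module.End.one_eq_id, map_add, map_one]
      exact det_one_add_of_isNilpotent hnil
    have key : (s0 * (a top)⁻¹) •
          (Matrix.of fun k m => lam (b k * b m) : Matrix (Fin d) (Fin d) ℂ)
        = T.transpose * Nl := by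
      ext k j
      rw [Matrix.smul_apply, Matrix.mul_apply]
      have expand : l ((u * b k) * b j) = ∑ m, (b.repr (u * b k)) m * l (b m * b j) := by
        conv_lhs => rw [← b.sum_repr (u * b k)]
        rw [Finset.sum_mul, map_sum]
        refine Finset.sum_congr rfl fun m _ => ?_
        rw [smul_mul_assoc, map_smul, smul_eq_mul]
      have lhs_eq : (s0 * (a top)⁻¹) • (Matrix.of fun k m => lam (b k * b m) :
          Matrix (Fin d) (Fin d) ℂ) k j = (s0 * (a top)⁻¹) * lam (b k * b j) := rfl
      show (s0 * (a top)⁻¹) • lam (b k * b j) = _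
      rw [smul_eq_mul, ← hu_apply, ← mul_assoc, expand]
      refine Finset.sum_congr rfl fun m _ => ?_
      rw [Matrix.transpose_apply, hTdef, LinearMap.toMatrixAlgEquiv_apply,
        LinearMap.mulLeft_apply]
      rfl
    have hdet := congrArg Matrix.det key
    rw [Matrix.det_smul, Matrix.det_mul, Matrix.det_transpose, hT1, one_mul,
      Fintype.card_fin] at hdet
    rw [← hdet]
    field_simp
    rw [mul_assoc _ _ (a top ^ d), ← mul_pow, div_mul_cancel₀ _ hs]

section Product

variable (r : ℕ) (A : Fin r → Type*) [∀ i, CommRing (A i)] [∀ i, Algebra ℂ (A i)]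
  (d : Fin r → ℕ) (b : ∀ i, Module.Basis (Fin (d i)) ℂ (A i))

lemma multTable_pi_offdiag {i j : Fin r} (hij : i ≠ j) (k : Fin (d i)) (m : Fin (d j)) :
    multTable (Pi.basis b) ⟨i, k⟩ ⟨j, m⟩ = 0 := by
  have hzero : (Pi.basis b ⟨i, k⟩ : ∀ n, A n) * Pi.basis b ⟨j, m⟩ = 0 := by
    rw [Pi.basis_apply, Pi.basis_apply]
    ext n
    rcases eq_or_ne n i with rfl | h
    · simp [Pi.single_eq_of_ne hij]
    · simp [Pi.single_eq_of_ne h]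
  have hrep : ∀ p : Σ n, Fin (d n),
      (Pi.basis b).repr ((Pi.basis b) ⟨i, k⟩ * (Pi.basis b) ⟨j, m⟩) p = 0 := by
    intro p
    rw [hzero, map_zero]
    rfl
  simp only [multTable, Matrix.of_apply, hrep, map_zero, zero_mul, Finset.sum_const_zero]

lemma multTable_pi_diag (i : Fin r) (k m : Fin (d i)) :
    multTable (Pi.basis b) ⟨i, k⟩ ⟨i, m⟩ =
      rename (Sigma.mk i) (multTable (b i) k m) := by
  classical
  have hprod : (Pi.basis b ⟨i, k⟩ : ∀ n, A n) * Pi.basis b ⟨i, m⟩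
      = Pi.single i (b i k * b i m) := by
    rw [Pi.basis_apply, Pi.basis_apply]
    ext n
    rcases eq_or_ne n i with rfl | h
    · simp
    · simp [Pi.single_eq_of_ne h]
  have hR : rename (Sigma.mk i) (multTable (b i) k m)
      = ∑ q : Fin (d i), C ((b i).repr (b i k * b i m) q)
          * X (⟨i, q⟩ : Σ n, Fin (d n)) := by
    simp only [multTable, Matrix.of_apply, map_sum, map_mul, rename_C, rename_X]
  rw [hR]
  simp only [multTable, Matrix.of_apply, hprod]
  rw [← Finset.univ_sigma_univ, Finset.sum_sigma]
  rw [Finset.sum_eq_single i]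
  · refine Finset.sum_congr rfl fun q _ => ?_
    simp only [Pi.basis_repr, Pi.single_eq_same]
  · intro n _ hn
    apply Finset.sum_eq_zero
    intro q _
    simp only [Pi.basis_repr]
    rw [Pi.single_eq_of_ne hn]
    simp
  · intro h
    exact absurd (Finset.mem_univ i) h

end Product

/-- Let `A = A_1 × ⋯ × A_r` be a product of finite-dimensional local `ℂ`-algebras with
`dim_ℂ A_i = d_i`, each `A_i` Gorenstein, and choose on each `A_i` a basis adapted to the
`𝔪_i`-filtration whose last vector spans the socle `𝔪_i^{D_i}`.  Then, with respect to the
product basis, the determinant of the multiplication table of `A` is a nonzero scalar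
multiple of the monomial `a_1^{d_1} ⋯ a_r^{d_r}`, where `a_i` is the variable corresponding
to the socle generator of `A_i`. -/
theorem det_multTable_product_of_gorenstein
    (r : ℕ) (A : Fin r → Type*) [∀ i, CommRing (A i)] [∀ i, Algebra ℂ (A i)]
    [∀ i, FiniteDimensional ℂ (A i)] [∀ i, IsLocalRing (A i)]
    (d : Fin r → ℕ) (hd : ∀ i, 0 < d i)
    (hdim : ∀ i, Module.finrank ℂ (A i) = d i)
    (b : ∀ i, Module.Basis (Fin (d i)) ℂ (A i))
    (hGor : ∀ i, ∃ l : A i →ₗ[ℂ] ℂ,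
      Function.Bijective ((LinearMap.mul ℂ (A i)).compr₂ l))
    (D : Fin r → ℕ) (t : ∀ _ : Fin r, ℕ → ℕ)
    (hmono : ∀ i, Monotone (t i)) (ht0 : ∀ i, t i 0 = 0)
    (htD : ∀ i, t i (D i) = d i - 1) (htD1 : ∀ i, t i (D i + 1) = d i)
    (hfil : ∀ i, ∀ k ≤ D i + 1,
      (Submodule.restrictScalars ℂ ((IsLocalRing.maximalIdeal (A i)) ^ k : Ideal (A i))) =
        Submodule.span ℂ (⇑(b i) '' {j : Fin (d i) | t i k ≤ (j : ℕ)}))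
    (hsoc : ∀ i, ((IsLocalRing.maximalIdeal (A i)) ^ (D i) : Ideal (A i)) ≠ ⊥) :
    ∃ c : ℂ, c ≠ 0 ∧
      (multTable (Pi.basis b)).det =
        C c * ∏ i : Fin r,
          X (⟨i, ⟨d i - 1, by have := hd i; omega⟩⟩ : Σ i, Fin (d i)) ^ d i := by
  classical
  have hloc : ∀ i : Fin r, ∃ c : ℂ, c ≠ 0 ∧ (multTable (b i)).det
      = C c * X (⟨d i - 1, by have := hd i; omega⟩ : Fin (d i)) ^ d i := by
    intro i
    obtain ⟨l, hl⟩ := hGor i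
    refine det_multTable_local (hd i) (b i) _ l hl (D := D i) ?_ ?_
    · rw [hfil i (D i) (Nat.le_succ _), htD i]
      congr 1
      have hset : {j : Fin (d i) | d i - 1 ≤ (j : ℕ)}
          = {(⟨d i - 1, by have := hd i; omega⟩ : Fin (d i))} := by
        ext j
        simp only [Set.mem_setOf_eq, Set.mem_singleton_iff, Fin.ext_iff]
        have := j.isLt
        omega
      rw [hset, Set.image_singleton]
    · have h := hfil i (D i + 1) le_rfl
      rw [htD1 i] at h
      have hempty : {j : Fin (d i) | d i ≤ (j : ℕ)} = ∅ := by
        ext j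
        simp only [Set.mem_setOf_eq, Set.mem_empty_iff_false, iff_false, not_le]
        exact j.isLt
      rw [hempty, Set.image_empty, Submodule.span_empty] at h
      rwa [Submodule.restrictScalars_eq_bot_iff] at h
  choose c hc0 hcd using hloc
  refine ⟨∏ i, c i, Finset.prod_ne_zero_iff.mpr fun i _ => hc0 i, ?_⟩
  have hBT : (multTable (Pi.basis b)).BlockTriangular Sigma.fst := by
    rintro ⟨i, k⟩ ⟨j, m⟩ hlt
    exact multTable_pi_offdiag r A d b (fun h => by subst h; exact lt_irrefl _ hlt) k m
  rw [hBT.det_fintype]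
  have hblock : ∀ i : Fin r,
      ((multTable (Pi.basis b)).toSquareBlock Sigma.fst i).det
        = rename (Sigma.mk i) ((multTable (b i)).det) := by
    intro i
    let e : Fin (d i) ≃ {p : Σ j, Fin (d j) // p.1 = i} :=
      { toFun := fun q => ⟨⟨i, q⟩, rfl⟩
        invFun := fun p => Fin.cast (congrArg d p.2) p.1.2
        left_inv := fun q => rfl
        right_inv := by rintro ⟨⟨j, q⟩, rfl⟩; rfl }
    have h1 : (((multTable (Pi.basis b)).toSquareBlock Sigma.fst i).submatrix e e)
        = (multTable (b i)).map ⇑(rename (R := ℂ) (@Sigma.mk (Fin r) (fun j => Fin (d j)) i)) := by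
      refine Matrix.ext fun k m => ?_
      show (multTable (Pi.basis b)).toSquareBlock Sigma.fst i (e k) (e m) = _
      rw [Matrix.toSquareBlock_def]
      show multTable (Pi.basis b) ⟨i, k⟩ ⟨i, m⟩ = _
      rw [multTable_pi_diag r A d b i k m]
      rfl
    rw [← Matrix.det_submatrix_equiv_self e, h1, AlgHom.map_det, AlgHom.mapMatrix_apply]
  calc ∏ i : Fin r, ((multTable (Pi.basis b)).toSquareBlock Sigma.fst i).det
      = ∏ i : Fin r, rename (Sigma.mk i) ((multTable (b i)).det) :=
        Finset.prod_congr rfl fun i _ => hblock i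
    _ = ∏ i : Fin r, (C (c i) *
          X (⟨i, ⟨d i - 1, by have := hd i; omega⟩⟩ : Σ j, Fin (d j)) ^ d i) := by
        refine Finset.prod_congr rfl fun i _ => ?_
        rw [hcd i, map_mul, rename_C, map_pow, rename_X]
    _ = C (∏ i, c i) * ∏ i : Fin r,
          X (⟨i, ⟨d i - 1, by have := hd i; omega⟩⟩ : Σ j, Fin (d j)) ^ d i := by
        rw [Finset.prod_mul_distrib, map_prod]
end

section
/- The mixed Eulerian numbers e_{a_1,…,a_n} (indexed by nonnegative integers summing to n) are uniquely determined by the relations: (1) e_{1,1,…,1} = n!; (2) 2·e_{a_1,…,a_n} = e_{…,a_{k−1}+1, a_k−1,…} + e_{…, a_k−1, a_{k+1}+1,…} whenever 1 < k < n and a_k ≥ 2; (3) 2·e_{a_1,…,a_n} = e_{a_1−1, a_2+1, a_3,…,a_n} whenever a_1 ≥ 2; (4) 2·e_{a_1,…,a_n} = e_{a_1,…,a_{n−1}+1, a_n−1} whenever a_n ≥ 2. That is, any two families of numbers indexed by such tuples satisfying (1)–(4) coincide. -/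
/-- Move one unit of the tuple `a` from position `k` to position `j`. -/
def bumpTuple {n : ℕ} (a : Fin n → ℕ) (k j : Fin n) : Fin n → ℕ :=
  Function.update (Function.update a k (a k - 1)) j (Function.update a k (a k - 1) j + 1)

/-- A family of integers indexed by tuples `(a_1, …, a_{n+1})` of nonnegative integers summing
to `n+1` satisfies the mixed Eulerian relations if:
(1) `e(1,…,1) = (n+1)!`;
(2) `2e_{a} = e_{…,a_{k−1}+1,a_k−1,…} + e_{…,a_k−1,a_{k+1}+1,…}` for interior `k` with `a_k ≥ 2`;
(3) `2e_{a} = e_{a_1−1,a_2+1,…}` whenever `a_1 ≥ 2`;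
(4) `2e_{a} = e_{…,a_n+1,a_{n+1}−1}` whenever the last entry is `≥ 2`. -/
def SatisfiesEulerianRelations (n : ℕ) (e : (Fin (n + 1) → ℕ) → ℤ) : Prop :=
  e (fun _ => 1) = Nat.factorial (n + 1) ∧
  (∀ a : Fin (n + 1) → ℕ, (∑ i, a i) = n + 1 →
    ∀ (k : ℕ) (hk : 0 < k) (hkn : k < n),
      2 ≤ a ⟨k, by omega⟩ →
      2 * e a = e (bumpTuple a ⟨k, by omega⟩ ⟨k - 1, by omega⟩) +
        e (bumpTuple a ⟨k, by omega⟩ ⟨k + 1, by omega⟩)) ∧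
  (∀ a : Fin (n + 1) → ℕ, (∑ i, a i) = n + 1 → ∀ hn : 1 ≤ n,
    2 ≤ a 0 → 2 * e a = e (bumpTuple a 0 ⟨1, by omega⟩)) ∧
  (∀ a : Fin (n + 1) → ℕ, (∑ i, a i) = n + 1 → ∀ hn : 1 ≤ n,
    2 ≤ a (Fin.last n) → 2 * e a = e (bumpTuple a (Fin.last n) ⟨n - 1, by omega⟩))

lemma bumpTuple_apply {m : ℕ} (a : Fin m → ℕ) (k j i : Fin m) (hjk : j ≠ k) :
    bumpTuple a k j i = if i = j then a j + 1 else if i = k then a k - 1 else a i := by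
  unfold bumpTuple
  simp only [Function.update_apply, if_neg hjk]

lemma sum_mul_bumpTuple {m : ℕ} (a : Fin m → ℕ) (k j : Fin m) (hjk : j ≠ k) (hk : 1 ≤ a k)
    (c : Fin m → ℤ) :
    ∑ i, c i * (bumpTuple a k j i : ℤ) = (∑ i, c i * (a i : ℤ)) + c j - c k := by
  have h : ∀ i, (bumpTuple a k j i : ℤ)
      = (a i : ℤ) + (if i = j then 1 else 0) - (if i = k then 1 else 0) := by
    intro i
    rw [bumpTuple_apply a k j i hjk]
    by_cases h1 : i = j
    · subst h1
      have h2 : i ≠ k := hjk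
      simp [h2]
    · by_cases h2 : i = k
      · subst h2
        simp only [if_neg h1, if_pos rfl]
        have : ((a i - 1 : ℕ) : ℤ) = (a i : ℤ) - 1 := by
          have := Nat.cast_sub hk (R := ℤ); simpa using this
        simp [this, h1]
      · simp [h1, h2]
  simp only [h, mul_sub, mul_add, mul_ite, mul_one, mul_zero]
  rw [Finset.sum_sub_distrib, Finset.sum_add_distrib]
  simp [Finset.sum_ite_eq']

lemma sum_bumpTuple {m : ℕ} (a : Fin m → ℕ) (k j : Fin m) (hjk : j ≠ k) (hk : 1 ≤ a k) :
    ∑ i, bumpTuple a k j i = ∑ i, a i := by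
  have h := sum_mul_bumpTuple a k j hjk hk (fun _ => 1)
  simp only [one_mul] at h
  have : ((∑ i, bumpTuple a k j i : ℕ) : ℤ) = ((∑ i, a i : ℕ) : ℤ) := by
    push_cast
    rw [h]; ring
  exact_mod_cast this

set_option maxHeartbeats 1600000 in
/-- The mixed Eulerian numbers are uniquely determined by the relations (1)–(4): any two
families indexed by tuples of nonnegative integers summing to `n+1` which satisfy them
coincide. -/
theorem eulerian_relations_unique (n : ℕ) (e f : (Fin (n + 1) → ℕ) → ℤ)
    (he : SatisfiesEulerianRelations n e) (hf : SatisfiesEulerianRelations n f) :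
    ∀ a : Fin (n + 1) → ℕ, (∑ i, a i) = n + 1 → e a = f a := by
  obtain ⟨he1, he2, he3, he4⟩ := he
  obtain ⟨hf1, hf2, hf3, hf4⟩ := hf
  set g : (Fin (n+1) → ℕ) → ℤ := fun a => e a - f a with hg
  suffices H : ∀ a : Fin (n+1) → ℕ, (∑ i, a i) = n + 1 → g a = 0 by
    intro a ha
    have := H a ha
    simp only [hg] at this
    linarith
  set S : Finset (Fin (n+1) → ℕ) := Finset.Nat.antidiagonalTuple (n+1) (n+1) with hSdef
  have hmemS : ∀ a : Fin (n+1) → ℕ, a ∈ S ↔ (∑ i, a i) = n + 1 := fun a =>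
    Finset.Nat.mem_antidiagonalTuple
  have hSne : S.Nonempty := ⟨fun _ => 1, by simp [hmemS]⟩
  obtain ⟨amax, hamaxS, hamax⟩ := S.exists_max_image (fun x => |g x|) hSne
  set M := |g amax| with hMdef
  suffices hM0 : M = 0 by
    intro a ha
    have h1 := hamax a ((hmemS a).2 ha)
    have h2 := abs_nonneg (g a)
    have : |g a| = 0 := le_antisymm (by simpa [hM0] using h1) h2
    exact abs_eq_zero.mp this
  by_contra hMne
  have hMpos : 0 < M := lt_of_le_of_ne (abs_nonneg _) (Ne.symm hMne)
  set w : (Fin (n+1) → ℕ) → ℤ := fun x => ∑ i, (i.val : ℤ) * x i with hwdef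
  set T := S.filter (fun x => |g x| = M) with hTdef
  have hTne : T.Nonempty := ⟨amax, by simp [hTdef, hamaxS, hMdef]⟩
  obtain ⟨a0, ha0T, ha0max⟩ := T.exists_max_image w hTne
  have ha0S : a0 ∈ S := (Finset.mem_filter.mp ha0T).1
  have ha0M : |g a0| = M := (Finset.mem_filter.mp ha0T).2
  have ha0sum : (∑ i, a0 i) = n + 1 := (hmemS a0).1 ha0S
  by_cases hex : ∃ k : Fin (n+1), 2 ≤ a0 k
  · obtain ⟨k, hk2⟩ := hex
    have hn1 : 1 ≤ n := by
      have hle : a0 k ≤ ∑ i, a0 i :=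
        Finset.single_le_sum (fun i _ => Nat.zero_le (a0 i)) (Finset.mem_univ k)
      omega
    have hkle : k.val ≤ n := Nat.lt_succ_iff.mp k.isLt
    by_cases h0 : k.val = 0
    · -- left boundary
      have hk0 : k = 0 := Fin.ext h0
      have h2 : 2 ≤ a0 0 := hk0 ▸ hk2
      obtain ⟨b, hb⟩ : ∃ x, x = bumpTuple a0 0 ⟨1, by omega⟩ := ⟨_, rfl⟩
      have hrel : 2 * g a0 = g b := by
        have h1 := he3 a0 ha0sum hn1 h2
        have h2' := hf3 a0 ha0sum hn1 h2
        simp only [hg, hb]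
        linarith
      have hjk : (⟨1, by omega⟩ : Fin (n+1)) ≠ 0 := by
        intro h; simpa using congrArg Fin.val h
      have hbS : b ∈ S := by
        rw [hmemS, hb, sum_bumpTuple a0 0 ⟨1, by omega⟩ hjk (by omega)]
        exact ha0sum
      have hble := hamax b hbS
      have : |2 * g a0| = 2 * M := by rw [abs_mul, ha0M]; norm_num
      rw [hrel] at this
      linarith
    · by_cases hlast : k.val = n
      · -- right boundary
        have hk0 : k = Fin.last n := Fin.ext hlast
        have h2 : 2 ≤ a0 (Fin.last n) := hk0 ▸ hk2
        obtain ⟨b, hb⟩ : ∃ x, x = bumpTuple a0 (Fin.last n) ⟨n - 1, by omega⟩ := ⟨_, rfl⟩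
        have hrel : 2 * g a0 = g b := by
          have h1 := he4 a0 ha0sum hn1 h2
          have h2' := hf4 a0 ha0sum hn1 h2
          simp only [hg, hb]
          linarith
        have hjk : (⟨n - 1, by omega⟩ : Fin (n+1)) ≠ Fin.last n := by
          intro h
          have := congrArg Fin.val h
          simp [Fin.last] at this
          omega
        have hbS : b ∈ S := by
          rw [hmemS, hb, sum_bumpTuple a0 (Fin.last n) ⟨n - 1, by omega⟩ hjk (by omega)]
          exact ha0sum
        have hble := hamax b hbS
        have : |2 * g a0| = 2 * M := by rw [abs_mul, ha0M]; norm_num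
        rw [hrel] at this
        linarith
      · -- interior
        have hkpos : 0 < k.val := by omega
        have hkn : k.val < n := by omega
        have hketa : (⟨k.val, by omega⟩ : Fin (n+1)) = k := Fin.ext rfl
        have hk2' : 2 ≤ a0 ⟨k.val, by omega⟩ := by rw [hketa]; exact hk2
        obtain ⟨b, hb⟩ : ∃ x, x = bumpTuple a0 ⟨k.val, by omega⟩ ⟨k.val - 1, by omega⟩ := ⟨_, rfl⟩
        obtain ⟨c, hc⟩ : ∃ x, x = bumpTuple a0 ⟨k.val, by omega⟩ ⟨k.val + 1, by omega⟩ := ⟨_, rfl⟩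
        have hrel : 2 * g a0 = g b + g c := by
          have h1 := he2 a0 ha0sum k.val hkpos hkn hk2'
          have h2' := hf2 a0 ha0sum k.val hkpos hkn hk2'
          simp only [hg, hb, hc]
          linarith
        have hjkb : (⟨k.val - 1, by omega⟩ : Fin (n+1)) ≠ ⟨k.val, by omega⟩ := by
          intro h
          have := congrArg Fin.val h
          simp at this
          omega
        have hjkc : (⟨k.val + 1, by omega⟩ : Fin (n+1)) ≠ ⟨k.val, by omega⟩ := by
          intro h
          have := congrArg Fin.val h
          simp at this
        have hbS : b ∈ S := by
          rw [hmemS, hb, sum_bumpTuple a0 _ _ hjkb (by omega)]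
          exact ha0sum
        have hcS : c ∈ S := by
          rw [hmemS, hc, sum_bumpTuple a0 _ _ hjkc (by omega)]
          exact ha0sum
        have hble := hamax b hbS
        have hcle := hamax c hcS
        have h2M : |2 * g a0| = 2 * M := by rw [abs_mul, ha0M]; norm_num
        rw [hrel] at h2M
        have habs : |g b + g c| ≤ |g b| + |g c| := abs_add_le _ _
        have hgc : |g c| = M := le_antisymm hcle (by linarith)
        have hcT : c ∈ T := Finset.mem_filter.mpr ⟨hcS, hgc⟩
        have hwle := ha0max c hcT
        have hwc : w c = w a0 + 1 := by
          have := sum_mul_bumpTuple a0 ⟨k.val, by omega⟩ ⟨k.val + 1, by omega⟩ hjkc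
            (by omega) (fun i => (i.val : ℤ))
          simp only [hwdef, hc]
          rw [this]
          push_cast
          ring
        rw [hwc] at hwle
        linarith
  · push_neg at hex
    have hall : a0 = fun _ => 1 := by
      funext i
      by_contra hne
      have hi0 : a0 i = 0 := by have := hex i; omega
      have hlt : (∑ j, a0 j) < ∑ j : Fin (n+1), 1 := by
        apply Finset.sum_lt_sum (fun j _ => by have := hex j; omega)
        exact ⟨i, Finset.mem_univ i, by omega⟩
      simp at hlt
      omega
    have : g a0 = 0 := by
      simp only [hg, hall, he1, hf1]
      ring
    rw [this] at ha0M
    simp at ha0M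
    omega
end
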